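/- Let K ⊆ K' be differential fields with K' a finite Galois extension of K in characteristic zero, let T' be a differential subring of K' stable under Gal(K'/K), and set T = T' ∩ K. Let I be a prime differential ideal of T maximal among differential ideals of T not containing 1, and suppose T' is differentially simple. Then the extension ideal I·T' equals T', and consequently T has no nonzero proper differential ideal maximal among proper differential ideals; hence T is differentially simple. -/
import Mathlib


/-- An ideal of a subring `T` of `K`, given as a subset. -/
def IsIdealOf {K : Type*} [Field K] (T : Subring K) (J : Set K) : Prop :=
  J ⊆ (T : Set K) ∧ (0 : K) ∈ J ∧ (∀ x ∈ J, ∀ y ∈ J, x + y ∈ J) ∧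
    (∀ t ∈ T, ∀ x ∈ J, t * x ∈ J)

/-- A differential ideal of a differential subring `T` of `K`. -/
def IsDiffIdeal {K : Type*} [Field K] (d : K → K) (T : Subring K) (J : Set K) : Prop :=
  IsIdealOf T J ∧ (∀ x ∈ J, d x ∈ J)

def IsDiffSimple {K : Type*} [Field K] (d : K → K) (T : Subring K) : Prop :=
  ∀ J : Set K, IsDiffIdeal d T J → J = {0} ∨ J = (T : Set K)

/-- Let `T ⊆ T'` be differential subrings of a differential field with
`T'` integral over `T` and `T'` differentially simple (here `T = T' ∩ K` arises from a
Galois-stable `T'` in a finite Galois extension `K'/K`, the integrality being a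
consequence of Galois stability).  If `I` is a nonzero prime differential ideal of `T`
maximal among differential ideals of `T` not containing `1`, then the extension ideal
`I·T'` equals `T'` (every ideal of `T'` containing `I` is all of `T'`); consequently no
such `I` exists, and `T` is differentially simple. -/
theorem stmt_11 {K' : Type*} [Field K'] (d : K' → K')
    (hadd : ∀ x y : K', d (x + y) = d x + d y)
    (hmul : ∀ x y : K', d (x * y) = d x * y + x * d y)
    (T T' : Subring K') (hTT' : T ≤ T')
    (hTd : ∀ x ∈ T, d x ∈ T) (hT'd : ∀ x ∈ T', d x ∈ T')
    (hint : ∀ x ∈ T', ∃ p : Polynomial K', p.Monic ∧ (∀ i, p.coeff i ∈ T) ∧ p.eval x = 0)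
    (hT'simple : IsDiffSimple d T')
    (I : Set K') (hI : IsDiffIdeal d T I) (hInz : ∃ x ∈ I, x ≠ 0)
    (hIproper : (1 : K') ∉ I)
    (hIprime : ∀ a ∈ T, ∀ b ∈ T, a * b ∈ I → a ∈ I ∨ b ∈ I)
    (hImax : ∀ J : Set K', IsDiffIdeal d T J → (1 : K') ∉ J → I ⊆ J → J = I) :
    (∀ J : Set K', IsIdealOf T' J → I ⊆ J → J = (T' : Set K')) ∧
      IsDiffSimple d T := by
  have hd0 : d 0 = 0 := by
    have h := hadd 0 0
    rw [add_zero] at h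
    exact left_eq_add.mp h
  -- the T'-span of I, as a set of K'
  set E : Submodule T' K' := Submodule.span T' I with hE
  have hIE : I ⊆ (E : Set K') := Submodule.subset_span
  -- 1 belongs to the extension ideal I·T'
  have hone : (1 : K') ∈ E := by
    have hEsub : (E : Set K') ⊆ (T' : Set K') := by
      intro x hx
      exact Submodule.span_induction (fun y hy => hTT' (hI.1.1 hy)) T'.zero_mem
        (fun a b _ _ ha hb => T'.add_mem ha hb)
        (fun t a _ ha => T'.mul_mem t.2 ha) hx
    have hEdiff : IsDiffIdeal d T' (E : Set K') := by
      refine ⟨⟨hEsub, E.zero_mem, fun a ha b hb => E.add_mem ha hb, ?_⟩, ?_⟩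
      · intro t ht x hx
        exact E.smul_mem (⟨t, ht⟩ : T') hx
      · intro x hx
        refine Submodule.span_induction (fun y hy => hIE (hI.2 y hy)) ?_ ?_ ?_ hx
        · rw [hd0]; exact E.zero_mem
        · intro a b _ _ ha hb
          show d (a + b) ∈ E
          rw [hadd]; exact E.add_mem ha hb
        · intro t a haE ha
          show d ((t : K') * a) ∈ E
          rw [hmul]
          exact E.add_mem (E.smul_mem (⟨d (t : K'), hT'd _ t.2⟩ : T') haE)
            (E.smul_mem t ha)
    rcases hT'simple (E : Set K') hEdiff with h | h
    · exfalso
      obtain ⟨x, hxI, hx0⟩ := hInz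
      have : x ∈ ({0} : Set K') := h ▸ hIE hxI
      exact hx0 this
    · show (1 : K') ∈ (E : Set K')
      rw [h]; exact T'.one_mem
  -- PART 1
  have part1 : ∀ J : Set K', IsIdealOf T' J → I ⊆ J → J = (T' : Set K') := by
    intro J hJ hIJ
    have hEJ : (E : Set K') ⊆ J := by
      intro x hx
      exact Submodule.span_induction (fun y hy => hIJ hy) hJ.2.1
        (fun a b _ _ ha hb => hJ.2.2.1 a ha b hb)
        (fun t a _ ha => hJ.2.2.2 (t : K') t.2 a ha) hx
    have h1J : (1 : K') ∈ J := hEJ hone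
    apply Set.Subset.antisymm hJ.1
    intro t ht
    have := hJ.2.2.2 t ht 1 h1J
    rwa [mul_one] at this
  -- derive a contradiction using lying-over
  have hfalse : False := by
    letI : Algebra T T' := (Subring.inclusion hTT').toAlgebra
    have hinj : Function.Injective (algebraMap T T') := Set.inclusion_injective hTT'
    haveI : Algebra.IsIntegral T T' := by
      rw [Algebra.isIntegral_def]
      intro x
      obtain ⟨p, hm, hc, he⟩ := hint (x : K') x.2
      have hsub : (↑p.coeffs : Set K') ⊆ T := by
        intro c hc'
        rw [Finset.mem_coe, Polynomial.mem_coeffs_iff] at hc'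
        obtain ⟨n, _, rfl⟩ := hc'
        exact hc n
      refine ⟨p.toSubring T hsub, (Polynomial.monic_toSubring _ _ _).2 hm, ?_⟩
      apply Subtype.val_injective (p := fun y => y ∈ T')
      show T'.subtype _ = T'.subtype 0
      rw [Polynomial.hom_eval₂, map_zero]
      have hmap : (p.toSubring T hsub).map T.subtype = p := by
        ext n
        rw [Polynomial.coeff_map]
        exact Polynomial.coeff_toSubring p T hsub
      have hcomp : (T'.subtype).comp (algebraMap ↥T ↥T') = T.subtype := rfl
      rw [hcomp, Polynomial.eval₂_eq_eval_map, hmap]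
      exact he
    let I' : Ideal T :=
      { carrier := {x : T | (x : K') ∈ I}
        add_mem' := fun ha hb => hI.1.2.2.1 _ ha _ hb
        zero_mem' := hI.1.2.1
        smul_mem' := fun c x hx => hI.1.2.2.2 (c : K') c.2 (x : K') hx }
    haveI hI'prime : I'.IsPrime := by
      constructor
      · intro h
        have : (1 : T) ∈ I' := h ▸ Submodule.mem_top
        exact hIproper this
      · intro a b hab
        exact hIprime (a : K') a.2 (b : K') b.2 hab
    have hker : RingHom.ker (algebraMap T T') ≤ I' := by
      rw [(RingHom.injective_iff_ker_eq_bot _).mp hinj]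
      exact bot_le
    obtain ⟨Q, hQprime, hQcomap⟩ :=
      Ideal.exists_ideal_over_prime_of_isIntegral_of_isDomain I' hker
    -- the set corresponding to Q
    set J : Set K' := {x : K' | ∃ h : x ∈ T', (⟨x, h⟩ : T') ∈ Q} with hJdef
    have hJideal : IsIdealOf T' J := by
      refine ⟨fun x hx => hx.1, ⟨T'.zero_mem, Q.zero_mem⟩, ?_, ?_⟩
      · rintro x ⟨hx, hxQ⟩ y ⟨hy, hyQ⟩
        exact ⟨T'.add_mem hx hy, Q.add_mem hxQ hyQ⟩
      · rintro t ht x ⟨hx, hxQ⟩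
        exact ⟨T'.mul_mem ht hx, Q.mul_mem_left (⟨t, ht⟩ : T') hxQ⟩
    have hIJ : I ⊆ J := by
      intro x hx
      have hxT : x ∈ T := hI.1.1 hx
      refine ⟨hTT' hxT, ?_⟩
      have : (⟨x, hxT⟩ : T) ∈ Q.comap (algebraMap T T') := by
        rw [hQcomap]; exact hx
      exact this
    have := part1 J hJideal hIJ
    have h1 : (1 : K') ∈ J := this ▸ T'.one_mem
    obtain ⟨h1', h1Q⟩ := h1
    have : (1 : T') ∈ Q := h1Q
    exact hQprime.ne_top ((Ideal.eq_top_iff_one Q).mpr this)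
  exact ⟨part1, fun J hJ => hfalse.elim⟩
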